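/- arXiv:0808.3004 — 3 statements merged into one kernel-verified Lean document; each statement's English description precedes it below -/
import Mathlib

section
/- The function p ↦ p(1-p)^k / (1 - (1-p)^k) is strictly decreasing on (0,1) for every integer k ≥ 1. -/
/-!
Dividing numerator and denominator by `p (1 - p)^k` (the denominator is `p ∑_{i<k} (1 - p)^i`)
turns the function into `1 / (q + q² + ⋯ + q^k)` with `q = (1 - p)⁻¹`, and `q` increases with `p`.
-/

open Finset

theorem mul_one_sub_pow_div_eq_inv_sum {K : Type*} [Field K] {p : K} (hp₀ : p ≠ 0) (hp₁ : p ≠ 1)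
    (k : ℕ) :
    p * (1 - p) ^ k / (1 - (1 - p) ^ k) = (∑ j ∈ range k, (1 - p)⁻¹ ^ (j + 1))⁻¹ := by
  have hq_inv : (1 - p)⁻¹ ≠ 1 := by simpa [inv_eq_one, sub_eq_self] using hp₀
  simp_rw [pow_succ, ← sum_mul, geom_sum_eq hq_inv, inv_pow]
  field_simp
  ring

theorem strictMonoOn_sum_pow_succ {R : Type*} [Semiring R] [PartialOrder R] [IsStrictOrderedRing R]
    {k : ℕ} (hk : k ≠ 0) :
    StrictMonoOn (fun x : R => ∑ j ∈ range k, x ^ (j + 1)) (Set.Ici 0) := by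
  intro x hx y _ hxy
  exact sum_lt_sum_of_nonempty (nonempty_range_iff.mpr hk)
    fun j _ => pow_lt_pow_left₀ hxy hx j.succ_ne_zero

/-- The marginal stationary 'up'-transition probability of the k-in-a-row design,
p ↦ p(1-p)^k / (1 - (1-p)^k), is strictly decreasing on (0,1) for every k ≥ 1. -/
theorem kr_up_prob_strictAnti (k : ℕ) (hk : 1 ≤ k) :
    StrictAntiOn (fun p : ℝ => p * (1 - p) ^ k / (1 - (1 - p) ^ k)) (Set.Ioo 0 1) := by
  have hk₀ : k ≠ 0 := Nat.one_le_iff_ne_zero.mp hk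
  intro x hx y hy hxy
  have hx_inv : 0 < (1 - x)⁻¹ := inv_pos.mpr (sub_pos.mpr hx.2)
  have hy_inv : 0 < (1 - y)⁻¹ := inv_pos.mpr (sub_pos.mpr hy.2)
  have hinv_lt : (1 - x)⁻¹ < (1 - y)⁻¹ := inv_strictAnti₀ (sub_pos.mpr hy.2) (by linarith)
  have hsum_pos : 0 < ∑ j ∈ range k, (1 - x)⁻¹ ^ (j + 1) :=
    sum_pos (fun j _ => pow_pos hx_inv _) (nonempty_range_iff.mpr hk₀)
  simp only [mul_one_sub_pow_div_eq_inv_sum hx.1.ne' hx.2.ne,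
    mul_one_sub_pow_div_eq_inv_sum hy.1.ne' hy.2.ne]
  exact inv_strictAnti₀ hsum_pos
    (strictMonoOn_sum_pow_succ hk₀ hx_inv.le hy_inv.le hinv_lt)
end

section
/- For a k-in-a-row design with transition probabilities governed by a strictly increasing F, the stationary relative frequency of the top internal state τ = k-1 within level u equals [1-F_u]^{k-1}·F_u / (1 - [1-F_u]^k), where F_u = F(l_u). Consequently the marginal stationary profile satisfies π_{u+1}/π_u = F_u(1-F_u)^k / (F_{u+1}(1 - (1-F_u)^k)). -/
/-! Solving the recurrence gives `w τ = (1 - F_u) ^ τ * w 0`, so `π_u` is the geometric sum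
`w 0 * (1 - (1 - F_u) ^ k) / F_u`; dividing the top state `(1 - F_u) ^ (k - 1) * w 0` by it gives
the first identity, and the balance equation turns `(1 - F_u)` times it into
`F_{u+1} π_{u+1} / π_u`. -/

open Finset

theorem eq_pow_mul_of_succ_eq_mul {M : Type*} [Monoid M] {r : M} {w : ℕ → M} {n : ℕ}
    (h : ∀ τ, τ + 1 < n → w (τ + 1) = r * w τ) : ∀ τ < n, w τ = r ^ τ * w 0
  | 0, _ => by rw [pow_zero, one_mul]
  | τ + 1, hτ => by
    rw [h τ hτ, eq_pow_mul_of_succ_eq_mul h τ (by omega), ← mul_assoc, ← pow_succ']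

theorem sum_range_eq_mul_geom_of_succ_eq_mul {K : Type*} [Field K] {r : K} (hr : r ≠ 1)
    {w : ℕ → K} {n : ℕ} (h : ∀ τ, τ + 1 < n → w (τ + 1) = r * w τ) :
    ∑ τ ∈ range n, w τ = w 0 * (1 - r ^ n) / (1 - r) := by
  rw [sum_congr rfl fun τ hτ => eq_pow_mul_of_succ_eq_mul h τ (mem_range.mp hτ), ← sum_mul,
    geom_sum_eq hr, ← neg_div_neg_eq, neg_sub, neg_sub, div_mul_eq_mul_div, mul_comm]

/-- KR internal-state stationary structure: within a level the internal-state
frequencies are geometric with ratio (1-F_u), and the top internal state τ = k-1 has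
relative frequency (1-F_u)^{k-1}·F_u/(1-(1-F_u)^k); consequently the marginal
stationary profile is π_{u+1}/π_u = F_u(1-F_u)^k / (F_{u+1}(1-(1-F_u)^k)). -/
theorem kr_internal_states (k : ℕ) (hk : 1 ≤ k) (Fu Fv : ℝ)
    (hFu : Fu ∈ Set.Ioo (0 : ℝ) 1) (hFv : Fv ∈ Set.Ioo (0 : ℝ) 1)
    (w : ℕ → ℝ) (hw0 : 0 < w 0)
    (hgeom : ∀ τ, τ + 1 ≤ k - 1 → w (τ + 1) = (1 - Fu) * w τ)
    (πu πv : ℝ) (hπu : πu = ∑ τ ∈ Finset.range k, w τ)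
    (hbal : w (k - 1) * (1 - Fu) = πv * Fv) :
    w (k - 1) / πu = (1 - Fu) ^ (k - 1) * Fu / (1 - (1 - Fu) ^ k) ∧
    πv / πu = Fu * (1 - Fu) ^ k / (Fv * (1 - (1 - Fu) ^ k)) := by
  obtain ⟨hFu0, hFu1⟩ := hFu
  have hrec : ∀ τ, τ + 1 < k → w (τ + 1) = (1 - Fu) * w τ :=
    fun τ hτ => hgeom τ (by omega)
  have htop : w (k - 1) = (1 - Fu) ^ (k - 1) * w 0 := eq_pow_mul_of_succ_eq_mul hrec _ (by omega)
  have hsum : πu = w 0 * (1 - (1 - Fu) ^ k) / Fu := by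
    rw [hπu, sum_range_eq_mul_geom_of_succ_eq_mul (by linarith) hrec, sub_sub_cancel]
  have hrk : (1 - Fu) ^ k < 1 := pow_lt_one₀ (by linarith) (by linarith) (by omega)
  have hfreq : w (k - 1) / πu = (1 - Fu) ^ (k - 1) * Fu / (1 - (1 - Fu) ^ k) := by
    rw [htop, hsum]
    field_simp [hw0.ne', hFu0.ne', (sub_pos.mpr hrk).ne']
  refine ⟨hfreq, ?_⟩
  calc πv / πu = (1 - Fu) * (w (k - 1) / πu) / Fv := by
        rw [mul_div_assoc', mul_comm, hbal, mul_div_right_comm, mul_div_cancel_right₀ _ hFv.1.ne']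
    _ = Fu * (1 - Fu) ^ k / (Fv * (1 - (1 - Fu) ^ k)) := by
        rw [hfreq, mul_div_assoc', ← mul_assoc, ← pow_succ', Nat.sub_add_cancel hk,
          div_div, mul_comm Fv, mul_comm Fu]
end

section
/- Fix k ≥ 2 and let p = 1 - (1/2)^{1/k} be the common target. The ratio of KR to BCD stationary profiles, r(F) = [F(1-F)^{k-1}/(1 - (1-F)^k)]·[(1-p)/p], equals 1 at F = p and is strictly decreasing in F on (0,1). Hence the KR design is more 'peaked' than the same-target BCD design: its profile is at least as large below target and at most as large above target. -/
/-! Writing `q = 1 - F` and `1 - q ^ k = (1 - q) · ∑_{i<k} q ^ i`, the KR/BCD ratio becomes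
`q ^ (k - 1) / ∑_{i<k} q ^ i` times a positive constant. Comparing term by term, this is strictly
increasing in `q` once `k ≥ 2`, i.e. strictly decreasing in `F`. At the target `(1 - p) ^ k = 1/2`,
hence the ratio there is `2 (1 - p) ^ k = 1`, and monotonicity gives the comparison on both sides. -/

open Finset

section GeomSum

variable {R : Type*} [CommRing R] [LinearOrder R] [IsStrictOrderedRing R]

theorem pow_pred_mul_geom_sum_lt {k : ℕ} (hk : 2 ≤ k) {a b : R} (ha : 0 < a) (hab : a < b) :
    a ^ (k - 1) * ∑ i ∈ range k, b ^ i < b ^ (k - 1) * ∑ i ∈ range k, a ^ i := by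
  have hb : 0 < b := ha.trans hab
  rw [mul_sum, mul_sum]
  apply sum_lt_sum
  · intro i hi
    obtain ⟨j, hj⟩ : ∃ j, k - 1 = j + i := ⟨k - 1 - i, by grind⟩
    have hle : a ^ j ≤ b ^ j := pow_le_pow_left₀ ha.le hab.le j
    calc a ^ (k - 1) * b ^ i = a ^ j * (a ^ i * b ^ i) := by rw [hj]; ring
      _ ≤ b ^ j * (a ^ i * b ^ i) := by gcongr
      _ = b ^ (k - 1) * a ^ i := by rw [hj]; ring
  · exact ⟨0, mem_range.mpr (by omega), by simpa using pow_lt_pow_left₀ hab ha.le (by omega)⟩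

end GeomSum

theorem mul_pow_pred_div_one_sub_pow (k : ℕ) {F : ℝ} (hF : F ≠ 0) :
    F * (1 - F) ^ (k - 1) / (1 - (1 - F) ^ k) =
      (1 - F) ^ (k - 1) / ∑ i ∈ range k, (1 - F) ^ i := by
  rw [← mul_neg_geom_sum, sub_sub_cancel, mul_div_mul_left _ _ hF]

theorem strictAntiOn_mul_pow_pred_div_one_sub_pow {k : ℕ} (hk : 2 ≤ k) :
    StrictAntiOn (fun F : ℝ => F * (1 - F) ^ (k - 1) / (1 - (1 - F) ^ k)) (Set.Ioo 0 1) := by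
  rintro F₁ ⟨hF₁, -⟩ F₂ ⟨-, hF₂⟩ hlt
  have hk0 : k ≠ 0 := by omega
  simp only [mul_pow_pred_div_one_sub_pow k hF₁.ne', mul_pow_pred_div_one_sub_pow k (hF₁.trans hlt).ne']
  rw [div_lt_div_iff₀ (geom_sum_pos (by linarith) hk0) (geom_sum_pos (by linarith) hk0)]
  exact pow_pred_mul_geom_sum_lt hk (by linarith) (by linarith)

theorem mul_pow_pred_div_one_sub_pow_mul_eq_one {k : ℕ} (hk : k ≠ 0) {p : ℝ} (hp : p ≠ 0)
    (hpk : (1 - p) ^ k = 1 / 2) :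
    p * (1 - p) ^ (k - 1) / (1 - (1 - p) ^ k) * ((1 - p) / p) = 1 := by
  have hsucc : (1 - p) * (1 - p) ^ (k - 1) = (1 - p) ^ k := by
    rw [← pow_succ', Nat.sub_add_cancel (Nat.one_le_iff_ne_zero.mpr hk)]
  field_simp
  rw [hsucc, hpk]
  norm_num

theorem one_sub_rpow_one_div_mem_Ioo {k : ℕ} (hk : k ≠ 0) {x : ℝ} (hx₀ : 0 < x) (hx₁ : x < 1) :
    1 - x ^ ((1 : ℝ) / k) ∈ Set.Ioo 0 1 := by
  have hpos : 0 < x ^ ((1 : ℝ) / k) := Real.rpow_pos_of_pos hx₀ _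
  have hlt : x ^ ((1 : ℝ) / k) < 1 := Real.rpow_lt_one hx₀.le hx₁ (by positivity)
  constructor <;> linarith

/-- With common target p = 1 - (1/2)^{1/k}, the ratio of KR to BCD stationary profiles
r(F) = [F(1-F)^{k-1}/(1-(1-F)^k)]·[(1-p)/p] equals 1 at F = p and is strictly
decreasing on (0,1); hence KR is more 'peaked' than same-target BCD. -/
theorem kr_more_peaked_than_bcd (k : ℕ) (hk : 2 ≤ k) :
    let p : ℝ := 1 - (1/2 : ℝ) ^ ((1 : ℝ) / k)
    let r : ℝ → ℝ := fun F =>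
      F * (1 - F) ^ (k - 1) / (1 - (1 - F) ^ k) * ((1 - p) / p)
    r p = 1 ∧ StrictAntiOn r (Set.Ioo 0 1) ∧
    (∀ F ∈ Set.Ioo (0 : ℝ) 1, F ≤ p → 1 ≤ r F) ∧
    (∀ F ∈ Set.Ioo (0 : ℝ) 1, p ≤ F → r F ≤ 1) := by
  intro p r
  have hk0 : k ≠ 0 := by omega
  have hp : p ∈ Set.Ioo 0 1 := one_sub_rpow_one_div_mem_Ioo hk0 (by norm_num) (by norm_num)
  have hpk : (1 - p) ^ k = 1 / 2 := by
    rw [sub_sub_cancel, one_div (k : ℝ), Real.rpow_inv_natCast_pow (by norm_num) hk0]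
  have hrp : r p = 1 := mul_pow_pred_div_one_sub_pow_mul_eq_one hk0 hp.1.ne' hpk
  have hanti : StrictAntiOn r (Set.Ioo 0 1) := fun F₁ hF₁ F₂ hF₂ hlt =>
    mul_lt_mul_of_pos_right (strictAntiOn_mul_pow_pred_div_one_sub_pow hk hF₁ hF₂ hlt)
      (div_pos (sub_pos.mpr hp.2) hp.1)
  exact ⟨hrp, hanti, fun F hF hFp => hrp ▸ hanti.antitoneOn hF hp hFp,
    fun F hF hpF => hrp ▸ hanti.antitoneOn hp hF hpF⟩
end
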